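/- Let T ⊆ ℝⁿ × ℝ and T_m ⊆ ℝⁿ × ℝ (m ∈ ℕ) be cones (sets closed under multiplication by positive scalars) such that T is contained in the Kuratowski lower limit of the sequence (T_m), and suppose T ∩ (ℝⁿ × {1}) ≠ ∅. Then for every d ∈ ℝⁿ × ℝ, limsup_{m→∞} dist(d, T_m ∩ (ℝⁿ × {1})) ≤ dist(d, T ∩ (ℝⁿ × {1})); in particular T_m ∩ (ℝⁿ × {1}) ≠ ∅ for all sufficiently large m. -/

import Mathlib

open Set Filter Metric Topology

noncomputable section

/-- `ℝⁿ` with the Euclidean norm. -/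
abbrev En (n : ℕ) := EuclideanSpace ℝ (Fin n)

/-- `ℝⁿ × ℝ` with the Euclidean (L²) norm. -/
abbrev Yn (n : ℕ) := WithLp 2 (En n × ℝ)

/-- The last ("time") coordinate of an element of `ℝⁿ × ℝ`. -/
def tY {n : ℕ} (y : Yn n) : ℝ := ((WithLp.equiv 2 (En n × ℝ)) y).2

/-- The hyperplane `ℝⁿ × {1}`. -/
def sliceOne (n : ℕ) : Set (Yn n) := {y | tY y = 1}

/-- A set is a cone if it is closed under multiplication by positive scalars. -/
def IsCone {X : Type*} [SMul ℝ X] (A : Set X) : Prop :=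
  ∀ a ∈ A, ∀ l : ℝ, 0 < l → l • a ∈ A

/-- Kuratowski lower limit of a sequence of sets: points `x` admitting `x m ∈ A m` for all
sufficiently large `m` with `x m → x`. -/
def kuratowskiLiminf {X : Type*} [TopologicalSpace X] (A : ℕ → Set X) : Set X :=
  {x | ∃ xs : ℕ → X, (∀ᶠ m in atTop, xs m ∈ A m) ∧ Tendsto xs atTop (𝓝 x)}

/-! Rescaling an approximating sequence `x m → y ∈ T ∩ (ℝⁿ × {1})` by the reciprocal of its last
coordinate keeps it in the cones `T_m`, moves it onto the slice, and does not change its limit, since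
the last coordinates tend to `1`. Hence every point of `T ∩ (ℝⁿ × {1})` is a limit of points
`y m ∈ T_m ∩ (ℝⁿ × {1})`, and `dist(d, T_m ∩ (ℝⁿ × {1})) ≤ dist(d, y m) → dist(d, y)`. -/

lemma continuous_tY {n : ℕ} : Continuous (tY (n := n)) :=
  continuous_snd.comp (WithLp.prodContinuousLinearEquiv 2 ℝ (En n) ℝ).continuous

lemma tY_smul {n : ℕ} (l : ℝ) (y : Yn n) : tY (l • y) = l * tY y := rfl

section kuratowskiLiminf

lemma eventually_nonempty_of_mem_kuratowskiLiminf {X : Type*} [TopologicalSpace X]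
    {A : ℕ → Set X} {x : X} (hx : x ∈ kuratowskiLiminf A) : ∀ᶠ m in atTop, (A m).Nonempty := by
  obtain ⟨xs, hxs, -⟩ := hx
  exact hxs.mono fun m hm => ⟨xs m, hm⟩

lemma mem_kuratowskiLiminf_inter_level {X : Type*} [SeminormedAddCommGroup X] [NormedSpace ℝ X]
    {A : ℕ → Set X} (hA : ∀ m, IsCone (A m)) {f : X → ℝ}
    (hf : Continuous f) (hf_smul : ∀ (l : ℝ) (x : X), f (l • x) = l * f x) :
    kuratowskiLiminf A ∩ {x | f x = 1} ⊆ kuratowskiLiminf fun m => A m ∩ {x | f x = 1} := by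
  rintro y ⟨⟨xs, hxs, hlim⟩, hy⟩
  have hf_lim : Tendsto (fun m => f (xs m)) atTop (𝓝 1) :=
    (hy : f y = 1) ▸ (hf.tendsto y).comp hlim
  have hpos : ∀ᶠ m in atTop, 0 < f (xs m) := hf_lim.eventually (eventually_gt_nhds one_pos)
  refine ⟨fun m => (f (xs m))⁻¹ • xs m, ?_, ?_⟩
  · filter_upwards [hxs, hpos] with m hm hp
    exact ⟨hA m _ hm _ (inv_pos.mpr hp),
      by simp only [mem_ofPred_eq, hf_smul, inv_mul_cancel₀ hp.ne']⟩
  · simpa using (hf_lim.inv₀ one_ne_zero).smul hlim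

variable {X : Type*} [PseudoMetricSpace X] {A : ℕ → Set X}

lemma limsup_infDist_le_dist_of_mem_kuratowskiLiminf {x : X} (hx : x ∈ kuratowskiLiminf A)
    (d : X) : limsup (fun m => infDist d (A m)) atTop ≤ dist d x := by
  obtain ⟨xs, hxs, hlim⟩ := hx
  have hdist : Tendsto (fun m => dist d (xs m)) atTop (𝓝 (dist d x)) :=
    tendsto_const_nhds.dist hlim
  calc limsup (fun m => infDist d (A m)) atTop
      ≤ limsup (fun m => dist d (xs m)) atTop :=
        limsup_le_limsup (hxs.mono fun m hm => infDist_le_dist_of_mem hm)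
          (isCoboundedUnder_le_of_le atTop fun _ => infDist_nonneg) hdist.isBoundedUnder_le
    _ = dist d x := hdist.limsup_eq

lemma limsup_infDist_le_infDist {S : Set X} (hS : S ⊆ kuratowskiLiminf A) (hne : S.Nonempty)
    (d : X) : limsup (fun m => infDist d (A m)) atTop ≤ infDist d S :=
  (le_infDist hne).mpr fun _ hx => limsup_infDist_le_dist_of_mem_kuratowskiLiminf (hS hx) d

end kuratowskiLiminf

theorem statement4_general (n : ℕ) (T : Set (Yn n)) (Tm : ℕ → Set (Yn n))
    (hTm : ∀ m, IsCone (Tm m))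
    (h : T ⊆ kuratowskiLiminf Tm) (hne : (T ∩ sliceOne n).Nonempty) :
    (∀ d : Yn n,
        Filter.limsup (fun m => infDist d (Tm m ∩ sliceOne n)) atTop ≤
          infDist d (T ∩ sliceOne n)) ∧
      ∀ᶠ m in atTop, (Tm m ∩ sliceOne n).Nonempty := by
  have hslice : T ∩ sliceOne n ⊆ kuratowskiLiminf fun m => Tm m ∩ sliceOne n :=
    fun y hy => mem_kuratowskiLiminf_inter_level hTm continuous_tY tY_smul ⟨h hy.1, hy.2⟩
  obtain ⟨x, hx⟩ := hne
  exact ⟨limsup_infDist_le_infDist hslice ⟨x, hx⟩,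
    eventually_nonempty_of_mem_kuratowskiLiminf (hslice hx)⟩

/-- If the cone `T` lies in the Kuratowski lower limit of the cones `T_m`
and `T ∩ (ℝⁿ × {1}) ≠ ∅`, then for every `d`,
`limsup_m dist(d, T_m ∩ (ℝⁿ × {1})) ≤ dist(d, T ∩ (ℝⁿ × {1}))`; in particular
`T_m ∩ (ℝⁿ × {1}) ≠ ∅` for all sufficiently large `m`. -/
theorem statement4 (n : ℕ) (T : Set (Yn n)) (Tm : ℕ → Set (Yn n))
    (hT : IsCone T) (hTm : ∀ m, IsCone (Tm m))
    (h : T ⊆ kuratowskiLiminf Tm) (hne : (T ∩ sliceOne n).Nonempty) :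
    (∀ d : Yn n,
        Filter.limsup (fun m => infDist d (Tm m ∩ sliceOne n)) atTop ≤
          infDist d (T ∩ sliceOne n)) ∧
      ∀ᶠ m in atTop, (Tm m ∩ sliceOne n).Nonempty :=
  statement4_general n T Tm hTm h hne
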